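/- arXiv:2212.08177 — 2 statements merged into one kernel-verified Lean document; each statement's English description precedes it below -/
import Mathlib

section
/- β-reduction of the Functional Machine Calculus is confluent: if a term M β-reduces in zero or more steps to N and also to P, then there exists a term Q such that N and P each β-reduce in zero or more steps to Q. -/
/-!
Tait–Martin-Löf's method: parallel reduction, which may contract any set of redexes
including those created by first reducing inside a redex, has the diamond property and
lies between one β-step and many, so β-reduction inherits confluence.

The redex `[N]a.H.a⟨x⟩.M` is non-local, so instead of decomposing terms into head contexts
we use a relation `Tm.Fires` that walks down the spine `H`, shifting `N` under each binder.
A redex survives parallel reduction of its body because firing commutes with substitution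
and with firing on a different location, and a redex determines its contractum.
-/

/-- Terms of the Functional Machine Calculus over a set `A` of locations,
in de Bruijn representation (so terms are automatically identified up to
α-equivalence): nil, variable prefix, push/application on a location,
and pop/abstraction on a location. -/
inductive Tm (A : Type) : Type
  | star : Tm A
  | var  : Nat → Tm A → Tm A
  | push : Tm A → A → Tm A → Tm A
  | pop  : A → Tm A → Tm A

namespace Tm

variable {A : Type}

/-- Lifting of a renaming under a binder. -/
def liftF (f : Nat → Nat) : Nat → Nat
  | 0 => 0
  | n+1 => f n + 1

/-- Renaming of de Bruijn indices. -/
def rename (f : Nat → Nat) : Tm A → Tm A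
  | star => star
  | var n M => var (f n) (rename f M)
  | push N a M => push (rename f N) a (rename f M)
  | pop a M => pop a (rename (liftF f) M)

/-- Capture-avoiding composition `N ; M`. -/
def comp : Tm A → Tm A → Tm A
  | star, P => P
  | var n N, P => var n (comp N P)
  | push Q a N, P => push Q a (comp N P)
  | pop a N, P => pop a (comp N (rename Nat.succ P))

/-- Lifting of a substitution under a binder. -/
def liftS (σ : Nat → Tm A) : Nat → Tm A
  | 0 => var 0 star
  | n+1 => rename Nat.succ (σ n)

/-- Capture-avoiding simultaneous substitution; note
`{N/x}(x.M) = N ; {N/x}M`. -/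
def subst (σ : Nat → Tm A) : Tm A → Tm A
  | star => star
  | var n M => comp (σ n) (subst σ M)
  | push N a M => push (subst σ N) a (subst σ M)
  | pop a M => pop a (subst (liftS σ) M)

/-- Capture-avoiding substitution `{N/x}M` of `N` for the variable
bound immediately outside `M`. -/
def subst1 (N : Tm A) : Tm A → Tm A :=
  subst (fun n => match n with | 0 => N | n+1 => var n star)

end Tm

/-- Head contexts `H ::= {} | [M]a.H | a<x>.H`. -/
inductive Hd (A : Type) : Type
  | hole : Hd A
  | push : Tm A → A → Hd A → Hd A
  | pop  : A → Hd A → Hd A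

namespace Hd

variable {A : Type}

/-- Plugging a term into the hole of a head context (binders of `H` capture). -/
def plug : Hd A → Tm A → Tm A
  | hole, M => M
  | push N a H, M => Tm.push N a (plug H M)
  | pop a H, M => Tm.pop a (plug H M)

/-- The number of binders of a head context. -/
def binders : Hd A → Nat
  | hole => 0
  | push _ _ H => binders H
  | pop _ H => binders H + 1

/-- The locations occurring along the spine of a head context. -/
def locs : Hd A → List A
  | hole => []
  | push _ a H => a :: locs H
  | pop a H => a :: locs H

end Hd

/-- β-reduction of the FMC: `[N]a.H.a<x>.M → H.{N/x}M` where the location `a`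
does not occur in `H` (in de Bruijn style no binding variable of `H` can
capture in `N`, which is shifted by the number of binders of `H`),
closed under all contexts. -/
inductive Step {A : Type} : Tm A → Tm A → Prop
  | beta (N : Tm A) (a : A) (H : Hd A) (M : Tm A) (h : a ∉ H.locs) :
      Step (Tm.push N a (H.plug (Tm.pop a M)))
           (H.plug (Tm.subst1 (Tm.rename (· + H.binders) N) M))
  | var {M M' : Tm A} (n : Nat) : Step M M' → Step (Tm.var n M) (Tm.var n M')
  | pushL {M M' : Tm A} (N : Tm A) (a : A) : Step M M' → Step (Tm.push N a M) (Tm.push N a M')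
  | pushArg {N N' : Tm A} (a : A) (M : Tm A) : Step N N' → Step (Tm.push N a M) (Tm.push N' a M)
  | pop {M M' : Tm A} (a : A) : Step M M' → Step (Tm.pop a M) (Tm.pop a M')

namespace Tm

variable {A : Type}

theorem liftF_comp (f g : ℕ → ℕ) : liftF f ∘ liftF g = liftF (f ∘ g) := by
  funext n; cases n <;> rfl

theorem rename_rename (f g : ℕ → ℕ) (M : Tm A) :
    rename f (rename g M) = rename (f ∘ g) M := by
  induction M generalizing f g with
  | star => rfl
  | var n M ih => simp only [rename, ih]; rfl
  | push N a M ihN ihM => simp only [rename, ihN, ihM]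
  | pop a M ih => simp only [rename, ih, liftF_comp]

theorem rename_id (M : Tm A) : rename (fun n => n) M = M := by
  induction M with
  | star => rfl
  | var n M ih => simp only [rename, ih]
  | push N a M ihN ihM => simp only [rename, ihN, ihM]
  | pop a M ih =>
    have hlift : liftF (fun n => n) = fun n => n := by funext n; cases n <;> rfl
    simp only [rename, hlift, ih]

theorem rename_liftF_rename_succ (f : ℕ → ℕ) (M : Tm A) :
    rename (liftF f) (rename Nat.succ M) = rename Nat.succ (rename f M) := by
  simp only [rename_rename]; rfl

theorem rename_comp (f : ℕ → ℕ) (M N : Tm A) :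
    rename f (comp M N) = comp (rename f M) (rename f N) := by
  induction M generalizing f N with
  | star => rfl
  | var n M ih => simp only [comp, rename, ih]
  | push Q a M _ ihM => simp only [comp, rename, ihM]
  | pop a M ih => simp only [comp, rename, ih, rename_liftF_rename_succ]

theorem comp_assoc (M N P : Tm A) : comp (comp M N) P = comp M (comp N P) := by
  induction M generalizing N P with
  | star => rfl
  | var n M ih => simp only [comp, ih]
  | push Q a M _ ihM => simp only [comp, ihM]
  | pop a M ih => simp only [comp, ih, rename_comp]

theorem comp_star (M : Tm A) : comp M star = M := by
  induction M with
  | star => rfl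
  | var n M ih => simp only [comp, ih]
  | push Q a M _ ihM => simp only [comp, ihM]
  | pop a M ih => simp only [comp, rename, ih]

theorem liftS_comp_liftF (σ : ℕ → Tm A) (f : ℕ → ℕ) : liftS σ ∘ liftF f = liftS (σ ∘ f) := by
  funext n; cases n <;> rfl

theorem subst_rename (σ : ℕ → Tm A) (f : ℕ → ℕ) (M : Tm A) :
    subst σ (rename f M) = subst (σ ∘ f) M := by
  induction M generalizing σ f with
  | star => rfl
  | var n M ih => simp only [subst, rename, ih]; rfl
  | push N a M ihN ihM => simp only [subst, rename, ihN, ihM]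
  | pop a M ih => simp only [subst, rename, ih, liftS_comp_liftF]

theorem rename_comp_liftS (f : ℕ → ℕ) (σ : ℕ → Tm A) :
    rename (liftF f) ∘ liftS σ = liftS (rename f ∘ σ) := by
  funext n; cases n with
  | zero => rfl
  | succ n => exact rename_liftF_rename_succ f (σ n)

theorem rename_subst (f : ℕ → ℕ) (σ : ℕ → Tm A) (M : Tm A) :
    rename f (subst σ M) = subst (rename f ∘ σ) M := by
  induction M generalizing f σ with
  | star => rfl
  | var n M ih => simp only [subst, rename_comp, ih]; rfl
  | push N a M ihN ihM => simp only [subst, rename, ihN, ihM]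
  | pop a M ih => simp only [subst, rename, ih, rename_comp_liftS]

theorem subst_liftS_rename_succ (σ : ℕ → Tm A) (M : Tm A) :
    subst (liftS σ) (rename Nat.succ M) = rename Nat.succ (subst σ M) := by
  rw [subst_rename, rename_subst]; rfl

theorem subst_comp (σ : ℕ → Tm A) (M N : Tm A) :
    subst σ (comp M N) = comp (subst σ M) (subst σ N) := by
  induction M generalizing σ N with
  | star => rfl
  | var n M ih => simp only [comp, subst, ih, comp_assoc]
  | push Q a M _ ihM => simp only [comp, subst, ihM]
  | pop a M ih => simp only [comp, subst, ih, subst_liftS_rename_succ]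

theorem subst_var (f : ℕ → ℕ) (M : Tm A) :
    subst (fun n => var (f n) star) M = rename f M := by
  induction M generalizing f with
  | star => rfl
  | var n M ih => simp only [subst, rename, comp, ih]
  | push N a M ihN ihM => simp only [subst, rename, ihN, ihM]
  | pop a M ih =>
    have hlift : liftS (fun n => var (f n) star) = fun n => var (liftF f n) (star : Tm A) := by
      funext n; cases n <;> rfl
    simp only [subst, rename, hlift, ih]

theorem subst_var_id (M : Tm A) : subst (fun n => var n star) M = M :=
  (subst_var (fun n => n) M).trans (rename_id M)

theorem subst_comp_liftS (τ σ : ℕ → Tm A) :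
    subst (liftS τ) ∘ liftS σ = liftS (subst τ ∘ σ) := by
  funext n; cases n with
  | zero => rfl
  | succ n => exact subst_liftS_rename_succ τ (σ n)

theorem subst_subst (τ σ : ℕ → Tm A) (M : Tm A) :
    subst τ (subst σ M) = subst (subst τ ∘ σ) M := by
  induction M generalizing τ σ with
  | star => rfl
  | var n M ih => simp only [subst, subst_comp, ih]; rfl
  | push N a M ihN ihM => simp only [subst, ihN, ihM]
  | pop a M ih => simp only [subst, ih, subst_comp_liftS]

theorem subst1_rename_succ (N M : Tm A) : subst1 N (rename Nat.succ M) = M := by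
  rw [subst1, subst_rename]; exact subst_var_id M

theorem subst_subst1 (σ : ℕ → Tm A) (N M : Tm A) :
    subst σ (subst1 N M) = subst1 (subst σ N) (subst (liftS σ) M) := by
  simp only [subst1, subst_subst]
  congr 1
  funext n; cases n with
  | zero => exact (comp_star _).symm
  | succ n => exact (comp_star _).trans (subst1_rename_succ _ _).symm

theorem comp_subst1 (N M P : Tm A) :
    comp (subst1 N M) P = subst1 N (comp M (rename Nat.succ P)) := by
  rw [subst1, subst_comp]
  exact congrArg _ (subst1_rename_succ N P).symm

/-- `Fires a N M R`: `M = H.a⟨x⟩.K` with `a` not on the spine of `H`, and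
`R = H.{N/x}K`, so that `[N]a.M → R` is a β-step at the root. -/
inductive Fires (a : A) : Tm A → Tm A → Tm A → Prop
  | here (N K : Tm A) : Fires a N (pop a K) (subst1 N K)
  | push {N M R : Tm A} (P : Tm A) {b : A} : b ≠ a → Fires a N M R →
      Fires a N (push P b M) (push P b R)
  | pop {N M R : Tm A} {b : A} : b ≠ a → Fires a (rename Nat.succ N) M R →
      Fires a N (pop b M) (pop b R)

namespace Fires

variable {a : A}

theorem unique {N M R R' : Tm A} (h : Fires a N M R) (h' : Fires a N M R') : R = R' := by
  induction h generalizing R' with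
  | here N K =>
    cases h' with
    | here => rfl
    | pop hne => exact absurd rfl hne
  | push P _ _ ih =>
    cases h' with
    | push _ _ h' => rw [ih h']
  | pop hne _ ih =>
    cases h' with
    | here => exact absurd rfl hne
    | pop _ h' => rw [ih h']

theorem subst {N M R : Tm A} (h : Fires a N M R) (σ : ℕ → Tm A) :
    Fires a (Tm.subst σ N) (Tm.subst σ M) (Tm.subst σ R) := by
  induction h generalizing σ with
  | here N K => rw [subst_subst1]; exact here _ _
  | push P hne _ ih => exact push _ hne (ih σ)
  | pop hne _ ih =>
    refine pop hne ?_
    simpa only [subst_liftS_rename_succ] using ih (liftS σ)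

theorem rename {N M R : Tm A} (h : Fires a N M R) (f : ℕ → ℕ) :
    Fires a (Tm.rename f N) (Tm.rename f M) (Tm.rename f R) := by
  simpa only [subst_var] using h.subst (fun n => var (f n) star)

theorem subst1 {N M R : Tm A} (h : Fires a N M R) (P : Tm A) :
    Fires a (Tm.subst1 P N) (Tm.subst1 P M) (Tm.subst1 P R) :=
  h.subst _

theorem comp {N M R : Tm A} (h : Fires a N M R) (Q : Tm A) :
    Fires a N (Tm.comp M Q) (Tm.comp R Q) := by
  induction h generalizing Q with
  | here N K => rw [comp_subst1]; exact here _ _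
  | push P hne _ ih => exact push _ hne (ih Q)
  | pop hne _ ih => exact pop hne (ih _)

theorem comm {c : A} {N P M X Y : Tm A} (hac : a ≠ c) (hX : Fires c P M X) (hY : Fires a N M Y) :
    ∃ Z, Fires a N X Z ∧ Fires c P Y Z := by
  induction hX generalizing N Y with
  | here P K =>
    cases hY with
    | here => exact absurd rfl hac
    | pop _ hY => exact ⟨_, by simpa only [subst1_rename_succ] using hY.subst1 P, here _ _⟩
  | push Q hne _ ih =>
    cases hY with
    | push _ hne' hY =>
      obtain ⟨Z, hXZ, hYZ⟩ := ih hY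
      exact ⟨_, push Q hne' hXZ, push Q hne hYZ⟩
  | pop hne hX ih =>
    cases hY with
    | here => exact ⟨_, here _ _, by simpa only [subst1_rename_succ] using hX.subst1 _⟩
    | pop hne' hY =>
      obtain ⟨Z, hXZ, hYZ⟩ := ih hY
      exact ⟨_, pop hne' hXZ, pop hne hYZ⟩

end Fires

end Tm

namespace Hd

variable {A : Type}

theorem fires_plug {a : A} (N M : Tm A) (H : Hd A) (h : a ∉ H.locs) :
    Tm.Fires a N (H.plug (Tm.pop a M)) (H.plug (Tm.subst1 (Tm.rename (· + H.binders) N) M)) := by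
  induction H generalizing N with
  | hole => simpa [plug, binders, Tm.rename_id] using Tm.Fires.here N M
  | push P b H ih =>
    simp only [locs, List.mem_cons, not_or] at h
    exact Tm.Fires.push P (Ne.symm h.1) (ih N h.2)
  | pop b H ih =>
    simp only [locs, List.mem_cons, not_or] at h
    simpa [plug, binders, Tm.rename_rename, Function.comp_def, Nat.add_assoc, Nat.add_comm 1]
      using Tm.Fires.pop (Ne.symm h.1) (ih (Tm.rename Nat.succ N) h.2)

theorem exists_plug_of_fires {a : A} {N M R : Tm A} (h : Tm.Fires a N M R) :
    ∃ (H : Hd A) (K : Tm A), a ∉ H.locs ∧ M = H.plug (Tm.pop a K) ∧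
      R = H.plug (Tm.subst1 (Tm.rename (· + H.binders) N) K) := by
  induction h with
  | here N K => exact ⟨hole, K, List.not_mem_nil, rfl, by simp [plug, binders, Tm.rename_id]⟩
  | push P hne _ ih =>
    obtain ⟨H, K, ha, rfl, rfl⟩ := ih
    exact ⟨push P _ H, K, by simp [locs, hne.symm, ha], rfl, rfl⟩
  | pop hne _ ih =>
    obtain ⟨H, K, ha, rfl, rfl⟩ := ih
    refine ⟨pop _ H, K, by simp [locs, hne.symm, ha], rfl, ?_⟩
    simp [plug, binders, Tm.rename_rename, Function.comp_def, Nat.add_assoc, Nat.add_comm 1]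

end Hd

open Relation

theorem Step.reflTransGen_push {A : Type} {N N' M M' : Tm A} (a : A)
    (hN : ReflTransGen Step N N') (hM : ReflTransGen Step M M') :
    ReflTransGen Step (Tm.push N a M) (Tm.push N' a M') :=
  (hN.lift (Tm.push · a M) fun _ _ => Step.pushArg a M).trans
    (hM.lift (Tm.push N' a) fun _ _ => Step.pushL N' a)

theorem Step.push_of_fires {A : Type} {a : A} {N M R : Tm A} (h : Tm.Fires a N M R) :
    Step (Tm.push N a M) R := by
  obtain ⟨H, K, ha, rfl, rfl⟩ := Hd.exists_plug_of_fires h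
  exact Step.beta N a H K ha

inductive Par {A : Type} : Tm A → Tm A → Prop
  | star : Par Tm.star Tm.star
  | var {M M' : Tm A} (n : ℕ) : Par M M' → Par (Tm.var n M) (Tm.var n M')
  | push {N N' M M' : Tm A} (a : A) : Par N N' → Par M M' → Par (Tm.push N a M) (Tm.push N' a M')
  | pop {M M' : Tm A} (a : A) : Par M M' → Par (Tm.pop a M) (Tm.pop a M')
  | beta {N N' M M' R : Tm A} (a : A) : Par N N' → Par M M' → Tm.Fires a N' M' R →
      Par (Tm.push N a M) R

namespace Par

variable {A : Type}

theorem refl : ∀ M : Tm A, Par M M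
  | .star => star
  | .var n M => var n (refl M)
  | .push N a M => push a (refl N) (refl M)
  | .pop a M => pop a (refl M)

theorem rename {M M' : Tm A} (h : Par M M') (f : ℕ → ℕ) :
    Par (Tm.rename f M) (Tm.rename f M') := by
  induction h generalizing f with
  | star => exact star
  | var n _ ih => exact var _ (ih f)
  | push a _ _ ihN ihM => exact push a (ihN f) (ihM f)
  | pop a _ ih => exact pop a (ih _)
  | beta a _ _ hR ihN ihM => exact beta a (ihN f) (ihM f) (hR.rename f)

theorem comp {M M' Q Q' : Tm A} (h : Par M M') (hQ : Par Q Q') :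
    Par (Tm.comp M Q) (Tm.comp M' Q') := by
  induction h generalizing Q Q' with
  | star => exact hQ
  | var n _ ih => exact var n (ih hQ)
  | push a hN _ _ ihM => exact push a hN (ihM hQ)
  | pop a _ ih => exact pop a (ih (hQ.rename Nat.succ))
  | beta a hN _ hR _ ihM => exact beta a hN (ihM hQ) (hR.comp _)

theorem liftS {σ σ' : ℕ → Tm A} (hσ : ∀ n, Par (σ n) (σ' n)) :
    ∀ n, Par (Tm.liftS σ n) (Tm.liftS σ' n)
  | 0 => refl _
  | n + 1 => (hσ n).rename Nat.succ

theorem subst {M M' : Tm A} (h : Par M M') {σ σ' : ℕ → Tm A} (hσ : ∀ n, Par (σ n) (σ' n)) :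
    Par (Tm.subst σ M) (Tm.subst σ' M') := by
  induction h generalizing σ σ' with
  | star => exact star
  | var n _ ih => exact (hσ n).comp (ih hσ)
  | push a _ _ ihN ihM => exact push a (ihN hσ) (ihM hσ)
  | pop a _ ih => exact pop a (ih (liftS hσ))
  | beta a _ _ hR ihN ihM => exact beta a (ihN hσ) (ihM hσ) (hR.subst σ')

theorem subst1 {N N' M M' : Tm A} (hN : Par N N') (hM : Par M M') :
    Par (Tm.subst1 N M) (Tm.subst1 N' M') :=
  hM.subst fun n => match n with
    | 0 => hN
    | _ + 1 => refl _

theorem fires {a : A} {M M' N N' R : Tm A} (hM : Par M M') (hN : Par N N')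
    (hR : Tm.Fires a N M R) : ∃ R', Tm.Fires a N' M' R' ∧ Par R R' := by
  induction hM generalizing N N' R with
  | star => cases hR
  | var => cases hR
  | push b hP _ _ ihM =>
    cases hR with
    | push _ hne hR =>
      obtain ⟨R', hR', hRR'⟩ := ihM hN hR
      exact ⟨_, .push _ hne hR', push b hP hRR'⟩
  | pop b hM ih =>
    cases hR with
    | here => exact ⟨_, .here _ _, subst1 hN hM⟩
    | pop hne hR =>
      obtain ⟨R', hR', hRR'⟩ := ih (hN.rename Nat.succ) hR
      exact ⟨_, .pop hne hR', pop b hRR'⟩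
  | beta c hP _ hX _ ihM =>
    cases hR with
    | push _ hne hR =>
      obtain ⟨R', hR', hRR'⟩ := ihM hN hR
      obtain ⟨Z, hXZ, hR'Z⟩ := hX.comm hne.symm hR'
      exact ⟨Z, hXZ, beta c hP hRR' hR'Z⟩

theorem diamond {M X Y : Tm A} (hX : Par M X) (hY : Par M Y) : ∃ Z, Par X Z ∧ Par Y Z := by
  induction hX generalizing Y with
  | star => cases hY; exact ⟨_, star, star⟩
  | var n _ ih =>
    cases hY with
    | var _ hY =>
      obtain ⟨Z, hXZ, hYZ⟩ := ih hY
      exact ⟨_, var n hXZ, var n hYZ⟩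
  | pop a _ ih =>
    cases hY with
    | pop _ hY =>
      obtain ⟨Z, hXZ, hYZ⟩ := ih hY
      exact ⟨_, pop a hXZ, pop a hYZ⟩
  | push a _ _ ihN ihM =>
    cases hY with
    | push _ hN hM =>
      obtain ⟨N₃, hN₁, hN₂⟩ := ihN hN
      obtain ⟨M₃, hM₁, hM₂⟩ := ihM hM
      exact ⟨_, push a hN₁ hM₁, push a hN₂ hM₂⟩
    | beta _ hN hM hR =>
      obtain ⟨N₃, hN₁, hN₂⟩ := ihN hN
      obtain ⟨M₃, hM₁, hM₂⟩ := ihM hM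
      obtain ⟨R₃, hR₃, hRR₃⟩ := fires hM₂ hN₂ hR
      exact ⟨R₃, beta a hN₁ hM₁ hR₃, hRR₃⟩
  | beta a _ _ hR ihN ihM =>
    cases hY with
    | push _ hN hM =>
      obtain ⟨N₃, hN₁, hN₂⟩ := ihN hN
      obtain ⟨M₃, hM₁, hM₂⟩ := ihM hM
      obtain ⟨R₃, hR₃, hRR₃⟩ := fires hM₁ hN₁ hR
      exact ⟨R₃, hRR₃, beta a hN₂ hM₂ hR₃⟩
    | beta _ hN hM hR' =>
      obtain ⟨N₃, hN₁, hN₂⟩ := ihN hN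
      obtain ⟨M₃, hM₁, hM₂⟩ := ihM hM
      obtain ⟨R₃, hR₃, hRR₃⟩ := fires hM₁ hN₁ hR
      obtain ⟨R₃', hR₃', hRR₃'⟩ := fires hM₂ hN₂ hR'
      exact ⟨R₃, hRR₃, hR₃'.unique hR₃ ▸ hRR₃'⟩

theorem of_step {M M' : Tm A} (h : Step M M') : Par M M' := by
  induction h with
  | beta N a H M ha => exact beta a (refl N) (refl _) (Hd.fires_plug N M H ha)
  | var n _ ih => exact var n ih
  | pushL N a _ ih => exact push a (refl N) ih
  | pushArg a M _ ih => exact push a ih (refl M)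
  | pop a _ ih => exact pop a ih

theorem reflTransGen_step {M M' : Tm A} (h : Par M M') : ReflTransGen Step M M' := by
  induction h with
  | star => rfl
  | var n _ ih => exact ih.lift (Tm.var n) fun _ _ => Step.var n
  | push a _ _ ihN ihM => exact Step.reflTransGen_push a ihN ihM
  | pop a _ ih => exact ih.lift (Tm.pop a) fun _ _ => Step.pop a
  | beta a _ _ hR ihN ihM => exact (Step.reflTransGen_push a ihN ihM).tail (Step.push_of_fires hR)

end Par

theorem reflTransGen_par_eq_reflTransGen_step {A : Type} :
    ReflTransGen (Par (A := A)) = ReflTransGen Step :=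
  le_antisymm (reflTransGen_closed fun _ _ => Par.reflTransGen_step)
    (ReflTransGen.mono fun _ _ => Par.of_step)

/-- Confluence of β-reduction for the FMC. -/
theorem fmc_confluence {A : Type} (M N P : Tm A)
    (hN : Relation.ReflTransGen Step M N) (hP : Relation.ReflTransGen Step M P) :
    ∃ Q : Tm A, Relation.ReflTransGen Step N Q ∧ Relation.ReflTransGen Step P Q := by
  rw [← reflTransGen_par_eq_reflTransGen_step] at hN hP ⊢
  refine church_rosser (fun _ _ _ hX hY => ?_) hN hP
  obtain ⟨Z, hXZ, hYZ⟩ := hX.diamond hY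
  exact ⟨Z, .single hXZ, .single hYZ⟩
end

section
/- Expansion for sequential types: if Γ ⊢ M : rev(ρ⃗) ⟹ σ⃗ then for every type vector υ⃗, Γ ⊢ M : rev(ρ⃗) rev(υ⃗) ⟹ υ⃗ σ⃗. -/
/-- Terms of the sequential λ-calculus in de Bruijn representation
(so terms are automatically identified up to α-equivalence):
nil `*`, variable prefix `x.M`, push/application `[N].M`,
and pop/abstraction `<x>.M`. -/
inductive STm : Type
  | star : STm
  | var  : Nat → STm → STm
  | push : STm → STm → STm
  | pop  : STm → STm

namespace STm

/-- Lifting of a renaming under a binder. -/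
def liftF (f : Nat → Nat) : Nat → Nat
  | 0 => 0
  | n+1 => f n + 1

/-- Renaming of de Bruijn indices. -/
def rename (f : Nat → Nat) : STm → STm
  | star => star
  | var n M => var (f n) (rename f M)
  | push N M => push (rename f N) (rename f M)
  | pop M => pop (rename (liftF f) M)

/-- Capture-avoiding composition `N ; M`. -/
def comp : STm → STm → STm
  | star, P => P
  | var n N, P => var n (comp N P)
  | push Q N, P => push Q (comp N P)
  | pop N, P => pop (comp N (rename Nat.succ P))

/-- Lifting of a substitution under a binder. -/
def liftS (σ : Nat → STm) : Nat → STm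
  | 0 => var 0 star
  | n+1 => rename Nat.succ (σ n)

/-- Capture-avoiding simultaneous substitution; note
`{N/x}(x.M) = N ; {N/x}M`. -/
def subst (σ : Nat → STm) : STm → STm
  | star => star
  | var n M => comp (σ n) (subst σ M)
  | push N M => push (subst σ N) (subst σ M)
  | pop M => pop (subst (liftS σ) M)

/-- Capture-avoiding substitution `{N/x}M` of `N` for the variable bound
immediately outside `M`. -/
def subst1 (N : STm) : STm → STm :=
  subst (fun n => match n with | 0 => N | n+1 => var n star)

end STm

/-- Machine states: a stack of terms (written bottom-first, so the top
element is the last element of the list) together with a term. -/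
abbrev SState := List STm × STm

/-- The transitions of the sequential stack machine:
`(S, [N].M) → (S·N, M)` and `(S·N, <x>.M) → (S, {N/x}M)`. -/
inductive SMStep : SState → SState → Prop
  | push (S : List STm) (N M : STm) : SMStep (S, .push N M) (S ++ [N], M)
  | pop (S : List STm) (N M : STm) : SMStep (S ++ [N], .pop M) (S, STm.subst1 N M)

/-- A run of the sequential machine: a finite sequence of transitions. -/
def SRun : SState → SState → Prop := Relation.ReflTransGen SMStep

/-- Sequential types `ρ_n…ρ_1 ⟹ τ_1…τ_m`: an implication between two
finite vectors of sequential types. The first list is the input vector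
as written (i.e. `arr (rev ρ⃗) τ⃗` represents `rev(ρ⃗) ⟹ τ⃗`). -/
inductive STy : Type
  | arr : List STy → List STy → STy

/-- Typing judgments `Γ ⊢ M : τ` of the sequential λ-calculus, with the
context `Γ` a finite map from (de Bruijn) variables to types, given as a
list. -/
inductive Typing : List STy → STm → STy → Prop
  | star (Γ : List STy) (τs : List STy) :
      Typing Γ .star (.arr τs.reverse τs)
  | var (Γ : List STy) (n : Nat) (M : STm) (ρs σs τs υs : List STy) :
      Γ[n]? = some (.arr ρs.reverse σs) →
      Typing Γ M (.arr (σs.reverse ++ τs.reverse) υs) →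
      Typing Γ (.var n M) (.arr (ρs.reverse ++ τs.reverse) υs)
  | abs (Γ : List STy) (M : STm) (ρ : STy) (σs τs : List STy) :
      Typing (ρ :: Γ) M (.arr σs.reverse τs) →
      Typing Γ (.pop M) (.arr (ρ :: σs.reverse) τs)
  | app (Γ : List STy) (N M : STm) (ρ : STy) (σs τs : List STy) :
      Typing Γ N ρ →
      Typing Γ M (.arr (ρ :: σs.reverse) τs) →
      Typing Γ (.push N M) (.arr σs.reverse τs)


def STy.expand (υs : List STy) : STy → STy
  | .arr ρr σs => .arr (ρr ++ υs.reverse) (υs ++ σs)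

/-- Each rule is reapplied with `υ⃗` prepended to its free type vectors; reversal turns that
prefix into the suffix `rev(υ⃗)` of the input vector. -/
theorem Typing.expand {Γ : List STy} {M : STm} {τ : STy} (hM : Typing Γ M τ)
    (υs : List STy) : Typing Γ M (τ.expand υs) := by
  induction hM with
  | star Γ τs =>
    simpa [STy.expand] using Typing.star Γ (υs ++ τs)
  | var Γ n M ρs σs τs _ hn _ ih =>
    simpa [STy.expand] using
      Typing.var Γ n M ρs σs (υs ++ τs) _ hn (by simpa [STy.expand] using ih)
  | abs Γ M ρ σs τs _ ih =>
    simpa [STy.expand] using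
      Typing.abs Γ M ρ (υs ++ σs) (υs ++ τs) (by simpa [STy.expand] using ih)
  | app Γ N M ρ σs τs hN _ _ ih =>
    simpa [STy.expand] using
      Typing.app Γ N M ρ (υs ++ σs) (υs ++ τs) hN (by simpa [STy.expand] using ih)

/-- Expansion: if `Γ ⊢ M : rev(ρ⃗) ⟹ σ⃗` then for every type vector `υ⃗`,
`Γ ⊢ M : rev(ρ⃗) rev(υ⃗) ⟹ υ⃗ σ⃗`. -/
theorem seq_expansion (Γ : List STy) (M : STm) (ρs σs : List STy)
    (hM : Typing Γ M (.arr ρs.reverse σs)) (υs : List STy) :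
    Typing Γ M (.arr (ρs.reverse ++ υs.reverse) (υs ++ σs)) :=
  hM.expand υs
end
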